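/- Star-convexity construction: let S_1,…,S_n be d×d self-adjoint unitaries, ρ a density matrix, and w_1,…,w_n ∈ [−1,1]. Define Z(w) = w·X + √(1−w²)·Z, P_i = S_i ⊗ (⊗_{j=1}^n Z(w_i)^{δ_{ij}}) (i.e., Z(w_i) in the i-th auxiliary qubit slot and identity elsewhere), and τ = ρ ⊗ (|+⟩⟨+|)^{⊗n}. Then each P_i is a self-adjoint unitary, P_i and P_j anticommute (resp. commute) exactly when S_i and S_j do, and tr(τ P_i) = w_i · tr(ρ S_i) for every i. -/
import Mathlib


open Matrix Kronecker ComplexOrder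

namespace Stmt17

def X : Matrix (Fin 2) (Fin 2) ℂ := !![0, 1; 1, 0]
def Z : Matrix (Fin 2) (Fin 2) ℂ := !![1, 0; 0, -1]

/-- `Z(w) = w·X + √(1−w²)·Z`. -/
noncomputable def Zmix (w : ℝ) : Matrix (Fin 2) (Fin 2) ℂ :=
  (w : ℂ) • X + ((Real.sqrt (1 - w^2) : ℝ) : ℂ) • Z

/-- The `n`-qubit auxiliary operator `⊗_{j} Z(w i)^{δ_{ij}}`: `Z(w i)` in the `i`-th
slot and identity elsewhere, as a matrix indexed by `Fin n → Fin 2`. -/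
noncomputable def aux {n : ℕ} (w : Fin n → ℝ) (i : Fin n) :
    Matrix (Fin n → Fin 2) (Fin n → Fin 2) ℂ :=
  fun a b => ∏ j, (if j = i then Zmix (w i) else (1 : Matrix (Fin 2) (Fin 2) ℂ)) (a j) (b j)

/-- The projector `(|+⟩⟨+|)^{⊗n}`, all of whose entries equal `2⁻ⁿ`. -/
noncomputable def plusProj (n : ℕ) : Matrix (Fin n → Fin 2) (Fin n → Fin 2) ℂ :=
  fun _ _ => ((1 : ℂ) / 2)^n

/-! ### Auxiliary lemmas -/

lemma Zmix_eq (w : ℝ) :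
    Zmix w = !![((Real.sqrt (1 - w^2) : ℝ) : ℂ), (w:ℂ); (w:ℂ), -((Real.sqrt (1 - w^2) : ℝ) : ℂ)] := by
  unfold Zmix X Z
  ext i j
  fin_cases i <;> fin_cases j <;> simp

lemma Zmix_herm (w : ℝ) : (Zmix w)ᴴ = Zmix w := by
  rw [Zmix_eq]
  ext i j
  fin_cases i <;> fin_cases j <;> simp [conjTranspose_apply]

lemma Zmix_sq (w : ℝ) (h1 : -1 ≤ w) (h2 : w ≤ 1) : Zmix w * Zmix w = 1 := by
  set s : ℂ := ((Real.sqrt (1 - w^2) : ℝ) : ℂ) with hsdef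
  have hs : s * s = 1 - (w:ℂ)^2 := by
    rw [hsdef, ← Complex.ofReal_mul, Real.mul_self_sqrt (by nlinarith)]
    push_cast; ring
  have e11 : s*s + (w:ℂ)*(w:ℂ) = 1 := by linear_combination hs
  have e12 : s*(w:ℂ) + (w:ℂ)*(-s) = 0 := by ring
  have e21 : (w:ℂ)*s + (-s)*(w:ℂ) = 0 := by ring
  have e22 : (w:ℂ)*(w:ℂ) + (-s)*(-s) = 1 := by linear_combination hs
  rw [Zmix_eq, Matrix.mul_fin_two, Matrix.one_fin_two, ← hsdef, e11, e12, e21, e22]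

lemma Zmix_entrysum (w : ℝ) : ∑ x : Fin 2, ∑ y : Fin 2, Zmix w x y = 2 * (w : ℂ) := by
  rw [Zmix_eq]
  simp [Fin.sum_univ_two]
  ring

/-- Slotwise product matrix on `n` qubits. -/
noncomputable def prodMat {n : ℕ} (f : Fin n → Matrix (Fin 2) (Fin 2) ℂ) :
    Matrix (Fin n → Fin 2) (Fin n → Fin 2) ℂ :=
  fun a b => ∏ j, f j (a j) (b j)

lemma prodMat_mul {n : ℕ} (f g : Fin n → Matrix (Fin 2) (Fin 2) ℂ) :
    prodMat f * prodMat g = prodMat (fun j => f j * g j) := by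
  ext a b
  simp only [prodMat, Matrix.mul_apply]
  rw [Fintype.prod_sum (fun j x => f j (a j) x * g j x (b j))]
  exact Finset.sum_congr rfl fun c _ => (Finset.prod_mul_distrib).symm

lemma prodMat_one {n : ℕ} : prodMat (fun _ : Fin n => (1 : Matrix (Fin 2) (Fin 2) ℂ)) = 1 := by
  ext a b
  simp only [prodMat, Matrix.one_apply]
  by_cases h : a = b
  · subst h; simp
  · rw [if_neg h]
    obtain ⟨j, hj⟩ := Function.ne_iff.mp h
    exact Finset.prod_eq_zero (Finset.mem_univ j) (by simp [Matrix.one_apply, hj])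

lemma prodMat_conjT {n : ℕ} (f : Fin n → Matrix (Fin 2) (Fin 2) ℂ) :
    (prodMat f)ᴴ = prodMat (fun j => (f j)ᴴ) := by
  ext a b
  simp [prodMat, conjTranspose_apply, map_prod]

lemma prodMat_entrysum {n : ℕ} (f : Fin n → Matrix (Fin 2) (Fin 2) ℂ) :
    ∑ a : Fin n → Fin 2, ∑ b : Fin n → Fin 2, prodMat f a b
      = ∏ j, ∑ x : Fin 2, ∑ y : Fin 2, f j x y := by
  have h1 : ∀ a : Fin n → Fin 2, ∑ b : Fin n → Fin 2, prodMat f a b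
      = ∏ j, ∑ y : Fin 2, f j (a j) y :=
    fun a => (Fintype.prod_sum fun j y => f j (a j) y).symm
  simp only [h1]
  exact (Fintype.prod_sum fun j x => ∑ y : Fin 2, f j x y).symm

lemma kron_conjT {d n : ℕ} (A : Matrix (Fin d) (Fin d) ℂ)
    (B : Matrix (Fin n → Fin 2) (Fin n → Fin 2) ℂ) : (A ⊗ₖ B)ᴴ = Aᴴ ⊗ₖ Bᴴ := by
  ext ⟨i, a⟩ ⟨j, b⟩
  simp [conjTranspose_apply, kroneckerMap_apply]

lemma neg_kron {d n : ℕ} (M : Matrix (Fin d) (Fin d) ℂ)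
    (C : Matrix (Fin n → Fin 2) (Fin n → Fin 2) ℂ) : (-M) ⊗ₖ C = -(M ⊗ₖ C) := by
  ext ⟨i, a⟩ ⟨j, b⟩
  simp [kroneckerMap_apply]

lemma kron_cancel {d n : ℕ} (M N : Matrix (Fin d) (Fin d) ℂ)
    (C : Matrix (Fin n → Fin 2) (Fin n → Fin 2) ℂ) (hC : C * C = 1) :
    M ⊗ₖ C = N ⊗ₖ C ↔ M = N := by
  constructor
  · intro h
    have h2 := congrArg (· * ((1 : Matrix (Fin d) (Fin d) ℂ) ⊗ₖ C)) h
    simp only [← Matrix.mul_kronecker_mul, mul_one, one_mul, hC] at h2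
    ext i j
    have h3 := congrFun (congrFun h2 (i, fun _ => 0)) (j, fun _ => 0)
    simpa [Matrix.kroneckerMap_apply, Matrix.one_apply] using h3
  · rintro rfl; rfl

/-- Star-convexity construction: `P_i = S_i ⊗ Z(w_i)`-in-slot-`i`, `τ = ρ ⊗ (|+⟩⟨+|)^{⊗n}`
give self-adjoint unitaries with the same (anti)commutation pattern as the `S_i` and
`tr(τ P_i) = w_i · tr(ρ S_i)`. -/
theorem star_convexity_construction {n d : ℕ}
    (S : Fin n → Matrix (Fin d) (Fin d) ℂ)
    (hherm : ∀ i, (S i).IsHermitian) (hsq : ∀ i, S i * S i = 1)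
    (ρ : Matrix (Fin d) (Fin d) ℂ) (hρ : ρ.PosSemidef) (htr : ρ.trace = 1)
    (w : Fin n → ℝ) (hw : ∀ i, -1 ≤ w i ∧ w i ≤ 1) :
    (∀ i, (S i ⊗ₖ aux w i).IsHermitian) ∧
    (∀ i, (S i ⊗ₖ aux w i) * (S i ⊗ₖ aux w i) = 1) ∧
    (∀ i j, (S i ⊗ₖ aux w i) * (S j ⊗ₖ aux w j) = -((S j ⊗ₖ aux w j) * (S i ⊗ₖ aux w i))
        ↔ S i * S j = -(S j * S i)) ∧
    (∀ i j, (S i ⊗ₖ aux w i) * (S j ⊗ₖ aux w j) = (S j ⊗ₖ aux w j) * (S i ⊗ₖ aux w i)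
        ↔ S i * S j = S j * S i) ∧
    (∀ i, ((ρ ⊗ₖ plusProj n) * (S i ⊗ₖ aux w i)).trace = (w i : ℂ) * (ρ * S i).trace) := by
  -- slot functions
  set F : Fin n → Fin n → Matrix (Fin 2) (Fin 2) ℂ :=
    fun i j => if j = i then Zmix (w i) else 1 with hF
  have aux_eq : ∀ i, aux w i = prodMat (F i) := fun i => rfl
  have hZs : ∀ i, Zmix (w i) * Zmix (w i) = 1 := fun i => Zmix_sq _ (hw i).1 (hw i).2
  have auxH : ∀ i, (aux w i)ᴴ = aux w i := by
    intro i
    rw [aux_eq, prodMat_conjT]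
    have hfun : (fun j => (F i j)ᴴ) = F i := by
      funext k
      by_cases h : k = i <;> simp [hF, h, Zmix_herm]
    rw [hfun]
  have auxsq : ∀ i, aux w i * aux w i = 1 := by
    intro i
    rw [aux_eq, prodMat_mul]
    have hfun : (fun j => F i j * F i j) = fun _ : Fin n => (1 : Matrix (Fin 2) (Fin 2) ℂ) := by
      funext k
      by_cases h : k = i <;> simp [hF, h, hZs]
    rw [hfun, prodMat_one]
  have auxcomm : ∀ i j, aux w i * aux w j = aux w j * aux w i := by
    intro i j
    rw [aux_eq i, aux_eq j, prodMat_mul, prodMat_mul]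
    have hfun : (fun k => F i k * F j k) = (fun k => F j k * F i k) := by
      funext k
      by_cases h1 : k = i
      · subst h1
        by_cases h2 : k = j
        · subst h2; rfl
        · simp [hF, h2, Ne.symm h2]
      · by_cases h2 : k = j
        · subst h2
          simp [hF, h1, Ne.symm h1]
        · simp [hF, h1, h2]
    rw [hfun]
  have auxCsq : ∀ i j, (aux w i * aux w j) * (aux w i * aux w j) = 1 := by
    intro i j
    calc (aux w i * aux w j) * (aux w i * aux w j)
        = aux w i * ((aux w j * aux w i) * aux w j) := by rw [mul_assoc, mul_assoc]
      _ = aux w i * ((aux w i * aux w j) * aux w j) := by rw [auxcomm j i]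
      _ = (aux w i * aux w i) * (aux w j * aux w j) := by
            rw [mul_assoc, mul_assoc]
      _ = 1 := by rw [auxsq, auxsq, one_mul]
  refine ⟨?_, ?_, ?_, ?_, ?_⟩
  · -- Hermitian
    intro i
    show (S i ⊗ₖ aux w i)ᴴ = _
    rw [kron_conjT, auxH, (hherm i)]
  · -- square one
    intro i
    rw [← Matrix.mul_kronecker_mul, hsq i, auxsq i, Matrix.one_kronecker_one]
  · -- anticommutation
    intro i j
    rw [← Matrix.mul_kronecker_mul, ← Matrix.mul_kronecker_mul, auxcomm j i,
      ← neg_kron, kron_cancel _ _ _ (auxCsq i j)]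
  · -- commutation
    intro i j
    rw [← Matrix.mul_kronecker_mul, ← Matrix.mul_kronecker_mul, auxcomm j i,
      kron_cancel _ _ _ (auxCsq i j)]
  · -- trace
    intro i
    have hn : 0 < n := i.pos
    have hTaux : (plusProj n * aux w i).trace = (w i : ℂ) := by
      have hsum : ∑ a : Fin n → Fin 2, ∑ b : Fin n → Fin 2, aux w i a b
          = 2 * (w i : ℂ) * 2 ^ (n - 1) := by
        rw [aux_eq, prodMat_entrysum]
        have hent : ∀ j, (∑ x : Fin 2, ∑ y : Fin 2, F i j x y)
            = if j = i then 2 * (w i : ℂ) else 2 := by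
          intro j
          by_cases h : j = i
          · simp only [hF, h, if_pos rfl, if_true]
            exact Zmix_entrysum (w i)
          · simp [hF, h, Fin.sum_univ_two, Matrix.one_apply]
        rw [Finset.prod_congr rfl (fun j _ => hent j)]
        rw [← Finset.mul_prod_erase Finset.univ _ (Finset.mem_univ i), if_pos rfl]
        congr 1
        rw [Finset.prod_congr rfl (fun j hj => if_neg (Finset.ne_of_mem_erase hj)),
          Finset.prod_const, Finset.card_erase_of_mem (Finset.mem_univ i),
          Finset.card_univ, Fintype.card_fin]
      have : (plusProj n * aux w i).trace
          = ((1:ℂ)/2)^n * ∑ c : Fin n → Fin 2, ∑ b : Fin n → Fin 2, aux w i b c := by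
        simp only [Matrix.trace, Matrix.diag, Matrix.mul_apply, plusProj, Finset.mul_sum]
      rw [this, Finset.sum_comm, hsum]
      have h2 : ((2:ℂ)) * 2 ^ (n-1) = 2 ^ n := by
        rw [mul_comm, ← pow_succ, Nat.sub_add_cancel hn]
      have h3 : ((1:ℂ)/2)^n * 2^n = 1 := by
        rw [← mul_pow]; norm_num
      calc ((1:ℂ)/2)^n * (2 * (w i : ℂ) * 2 ^ (n-1))
          = (w i : ℂ) * (((1:ℂ)/2)^n * (2 * 2^(n-1))) := by ring
        _ = (w i : ℂ) := by rw [h2, h3, mul_one]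
    rw [← Matrix.mul_kronecker_mul, Matrix.trace_kronecker, hTaux, mul_comm]

end Stmt17
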